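/- In the counterexample instance, although the demand D({2,3}) = 12 strictly exceeds the capacity P = 8, no cost-minimal feasible solution contains a robot spraying the full capacity 8 on edge {2,3}: there exists a feasible solution of cost 7, while every feasible solution in which some robot r has y_r({2,3}) = 8 has cost at least 9 > 7. (This is the paper's Theorem 2: the condition D_{ij} > P is not sufficient to guarantee an optimal solution with a robot r such that y^r_{ij} = P.) -/

import Mathlib

/-!
Two robots, one on the triangle `0-1-2-0` and one on the square `0-3-2-1-0`, each spraying `6`
on `{1, 2}` and `1` on the other edges of its walk, give a feasible solution of cost `3 + 4 = 7`.

If instead a robot `r` sprays the full capacity `8` on `{1, 2}`, it sprays nothing else, so the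
remaining demand on `{1, 2}` needs a robot `a ≠ r` and the edge `{2, 3}` a robot `b ≠ r`; a
closed walk from the depot through `{1, 2}` or `{2, 3}` visits three vertices, so has length `≥ 3`.
For `a ≠ b` this costs at least `3 + 3 + 3`. For `a = b` the walk of `a` visits all four vertices,
so has length at least `4`; it either traverses all five edges, and then has length at least `6`
because a closed walk using each edge once would be Eulerian while the depot has odd degree `3`,
or it misses an edge, which costs a fourth robot at least `2`. Either way the cost is at least `9`.
-/

/-- The counterexample graph of the paper's Theorem 2: the 4-cycle `0-1-2-3-0` together
with the chord `{0,2}` (vertices `0,1,2,3` stand for the paper's vertices `1,2,3,4`;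
the depot is vertex `0`; the missing edge `{1,3}` is the paper's `{2,4}`). -/
def CG : SimpleGraph (Fin 4) where
  Adj a b := a ≠ b ∧ s(a, b) ≠ s(1, 3)
  symm := by
    constructor
    intro a b h
    exact ⟨h.1.symm, by rw [Sym2.eq_swap]; exact h.2⟩
  loopless := by
    constructor
    intro a h
    exact h.1 rfl

instance : DecidableRel CG.Adj := fun a b =>
  decidable_of_iff (a ≠ b ∧ s(a, b) ≠ s(1, 3)) Iff.rfl

/-- Demands: `12` on the edge `{1,2}` (the paper's `{2,3}`) and `1` on every other edge. -/
noncomputable def Dem : Sym2 (Fin 4) → ℝ := fun e => if e = s(1, 2) then 12 else 1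

/-- A feasible solution: a finite family of closed walks at the depot `0` together with
nonnegative sprays `y r e`, where `y r e > 0` only if robot `r`'s walk traverses `e`,
each robot sprays at most the capacity `8` in total, and the total spray on each edge
equals its demand. -/
def Feasible {R : ℕ} (walk : Fin R → CG.Walk 0 0)
    (y : Fin R → Sym2 (Fin 4) → ℝ) : Prop :=
  (∀ r e, 0 ≤ y r e) ∧
  (∀ r e, 0 < y r e → e ∈ (walk r).edges) ∧
  (∀ r, ∑ e ∈ CG.edgeFinset, y r e ≤ 8) ∧
  (∀ e ∈ CG.edgeSet, ∑ r, y r e = Dem e)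

open Finset SimpleGraph

namespace SimpleGraph.Walk

variable {V : Type*} {G : SimpleGraph V} {u : V}

theorem not_nil_of_mem_edges {v : V} {w : G.Walk u v} {e : Sym2 V} (he : e ∈ w.edges) :
    ¬ w.Nil :=
  not_nil_iff_lt_length.mpr (w.length_edges ▸ List.length_pos_of_mem he)

variable [DecidableEq V]

theorem card_le_length_of_subset_support (w : G.Walk u u) (hw : ¬ w.Nil) {S : Finset V}
    (hS : ∀ v ∈ S, v ∈ w.support) : #S ≤ w.length := by
  cases w with
  | nil => exact absurd Walk.Nil.nil hw
  | cons h p =>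
    -- `u` occurs again at the end of `p`, so the first vertex of the support is redundant.
    have hsub : S ⊆ p.support.toFinset := fun v hv => by
      rcases List.mem_cons.mp (support_cons h p ▸ hS v hv) with rfl | hp
      · exact List.mem_toFinset.mpr p.end_mem_support
      · exact List.mem_toFinset.mpr hp
    calc #S ≤ #p.support.toFinset := card_le_card hsub
      _ ≤ p.support.length := List.toFinset_card_le _
      _ = (cons h p).length := by rw [length_support, length_cons]

theorem two_le_length_of_mem_edges (w : G.Walk u u) {e : Sym2 V} (he : e ∈ w.edges) :
    2 ≤ w.length := by
  induction e using Sym2.ind with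
  | h a b =>
    have hab : a ≠ b := (w.adj_of_mem_edges he).ne
    have := w.card_le_length_of_subset_support (not_nil_of_mem_edges he) (S := {a, b}) (by
      simp only [mem_insert, mem_singleton, forall_eq_or_imp, forall_eq]
      exact ⟨w.fst_mem_support_of_mem_edges he, w.snd_mem_support_of_mem_edges he⟩)
    rwa [card_pair hab] at this

theorem three_le_length_of_mem_edges (w : G.Walk u u) {a b : V} (he : s(a, b) ∈ w.edges)
    (ha : a ≠ u) (hb : b ≠ u) : 3 ≤ w.length := by
  have hab : a ≠ b := (w.adj_of_mem_edges he).ne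
  have := w.card_le_length_of_subset_support (not_nil_of_mem_edges he) (S := {u, a, b}) (by
    simp only [mem_insert, mem_singleton, forall_eq_or_imp, forall_eq]
    exact ⟨w.start_mem_support, w.fst_mem_support_of_mem_edges he,
      w.snd_mem_support_of_mem_edges he⟩)
  rwa [card_insert_of_notMem (by simp [ha.symm, hb.symm]), card_pair hab] at this

/-- A closed walk through every edge is Eulerian if it uses no edge twice, which is impossible
at a vertex of odd degree. -/
theorem card_edgeFinset_lt_length_of_odd_degree [Fintype V] [DecidableRel G.Adj]
    [Fintype G.edgeSet] (w : G.Walk u u) (hu : Odd (G.degree u))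
    (hw : ∀ e ∈ G.edgeSet, e ∈ w.edges) : #G.edgeFinset < w.length := by
  have hcard : #G.edgeFinset ≤ #w.edges.toFinset :=
    card_le_card fun e he => List.mem_toFinset.mpr (hw e (mem_edgeFinset.mp he))
  have hdedup : #w.edges.toFinset ≤ w.length := w.length_edges ▸ List.toFinset_card_le _
  refine lt_of_le_of_ne (hcard.trans hdedup) fun heq => ?_
  have hnodup : w.edges.Nodup := Multiset.coe_nodup.mp <|
    Multiset.toFinset_card_eq_card_iff_nodup.mp <| by
      simpa [w.length_edges] using le_antisymm hdedup (heq ▸ hcard)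
  have heven := ((IsTrail.mk hnodup).isEulerian_of_forall_mem hw).even_degree_iff (x := u)
  exact Nat.not_even_iff_odd.mpr hu (heven.mpr fun h => absurd rfl h)

end SimpleGraph.Walk

theorem Finset.exists_ne_pos_of_lt_sum {ι M : Type*} [Fintype ι] [DecidableEq ι]
    [AddCommMonoid M] [LinearOrder M] [IsOrderedAddMonoid M] {f : ι → M} {i : ι}
    (h : f i < ∑ j, f j) : ∃ j ≠ i, 0 < f j := by
  by_contra! hle
  have hrest : ∑ j ∈ univ.erase i, f j ≤ 0 :=
    sum_nonpos fun j hj => hle j (ne_of_mem_erase hj)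
  rw [← add_sum_erase _ _ (mem_univ i)] at h
  exact (add_le_of_nonpos_right hrest).not_gt h

section SumLowerBounds

variable {ι M : Type*} [Fintype ι] [DecidableEq ι] [AddCommMonoid M] [Preorder M]
  [CanonicallyOrderedAdd M] (f : ι → M) {i j k : ι}

theorem Finset.add_le_sum_univ (hij : i ≠ j) : f i + f j ≤ ∑ l, f l := by
  rw [← sum_pair hij]
  exact sum_le_sum_of_subset (subset_univ _)

theorem Finset.add_add_le_sum_univ (hij : i ≠ j) (hik : i ≠ k) (hjk : j ≠ k) :
    f i + f j + f k ≤ ∑ l, f l := by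
  have h := sum_le_sum_of_subset (f := f) (subset_univ {i, j, k})
  rwa [sum_insert (by simp [hij, hik]), sum_pair hjk, ← add_assoc] at h

end SumLowerBounds

theorem CG.edgeFinset_eq : CG.edgeFinset = {s(0, 1), s(0, 2), s(0, 3), s(1, 2), s(2, 3)} := by
  decide

theorem CG.four_le_length_of_mem_edges (w : CG.Walk 0 0) (h₁₂ : s(1, 2) ∈ w.edges)
    (h₂₃ : s(2, 3) ∈ w.edges) : 4 ≤ w.length :=
  w.card_le_length_of_subset_support (S := univ) (Walk.not_nil_of_mem_edges h₁₂) fun v _ => by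
    fin_cases v
    exacts [w.start_mem_support, w.fst_mem_support_of_mem_edges h₁₂,
      w.snd_mem_support_of_mem_edges h₁₂, w.snd_mem_support_of_mem_edges h₂₃]

theorem CG.six_le_length_of_forall_mem_edges (w : CG.Walk 0 0)
    (hw : ∀ e ∈ CG.edgeSet, e ∈ w.edges) : 6 ≤ w.length := by
  have h := w.card_edgeFinset_lt_length_of_odd_degree (by decide) hw
  rwa [CG.edgeFinset_eq] at h

def triangleWalk : CG.Walk 0 0 :=
  .cons (by decide : CG.Adj 0 1) (.cons (by decide : CG.Adj 1 2)
    (.cons (by decide : CG.Adj 2 0) .nil))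

def squareWalk : CG.Walk 0 0 :=
  .cons (by decide : CG.Adj 0 3) (.cons (by decide : CG.Adj 3 2)
    (.cons (by decide : CG.Adj 2 1) (.cons (by decide : CG.Adj 1 0) .nil)))

def triangleSpray (e : Sym2 (Fin 4)) : ℕ :=
  if e = s(1, 2) then 6 else if e = s(0, 1) ∨ e = s(0, 2) then 1 else 0

def squareSpray (e : Sym2 (Fin 4)) : ℕ :=
  if e = s(1, 2) then 6 else if e = s(0, 3) ∨ e = s(2, 3) then 1 else 0

theorem dem_eq_natCast (e : Sym2 (Fin 4)) :
    Dem e = ((if e = s(1, 2) then 12 else 1 : ℕ) : ℝ) := by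
  unfold Dem; split_ifs <;> norm_num

theorem feasible_triangleWalk_squareWalk :
    Feasible ![triangleWalk, squareWalk] fun r e => (![triangleSpray, squareSpray] r e : ℝ) := by
  refine ⟨fun r e => Nat.cast_nonneg _, fun r e hpos => ?_, fun r => ?_, fun e he => ?_⟩
  · replace hpos : 0 < ![triangleSpray, squareSpray] r e := Nat.cast_pos.mp hpos
    revert e; fin_cases r <;> decide
  · have h : ∑ e ∈ CG.edgeFinset, ![triangleSpray, squareSpray] r e ≤ 8 := by
      fin_cases r <;> decide
    beta_reduce; exact_mod_cast h
  · rw [Fin.sum_univ_two, ← Nat.cast_add, dem_eq_natCast, Nat.cast_inj]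
    have he : e ∈ CG.edgeFinset := mem_edgeFinset.mpr he
    revert e; decide

namespace Feasible

variable {R : ℕ} {walk : Fin R → CG.Walk 0 0} {y : Fin R → Sym2 (Fin 4) → ℝ}

theorem eq_zero_of_full_capacity (h : Feasible walk y) {r : Fin R} (hr : y r s(1, 2) = 8)
    {e : Sym2 (Fin 4)} (he : e ∈ CG.edgeSet) (hne : e ≠ s(1, 2)) : y r e = 0 := by
  have hpair : y r s(1, 2) + y r e ≤ ∑ e ∈ CG.edgeFinset, y r e := by
    rw [← sum_pair hne.symm]
    refine sum_le_sum_of_subset_of_nonneg (fun x hx => ?_) fun x _ _ => h.1 r x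
    rcases mem_insert.mp hx with rfl | hx
    · rw [CG.edgeFinset_eq]; decide
    · exact mem_singleton.mp hx ▸ mem_edgeFinset.mpr he
  linarith [h.1 r e, h.2.2.1 r]

theorem exists_ne_mem_edges (h : Feasible walk y) {e : Sym2 (Fin 4)} (he : e ∈ CG.edgeSet)
    {r : Fin R} (hlt : y r e < Dem e) : ∃ r' ≠ r, e ∈ (walk r').edges := by
  obtain ⟨r', hr', hpos⟩ := exists_ne_pos_of_lt_sum (f := (y · e)) (h.2.2.2 e he ▸ hlt)
  exact ⟨r', hr', h.2.1 r' e hpos⟩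

theorem nine_le_cost (h : Feasible walk y) {r : Fin R} (hr : y r s(1, 2) = 8) :
    9 ≤ ∑ r', (walk r').length := by
  have h₁₂ : s((1 : Fin 4), 2) ∈ CG.edgeSet := by decide
  have h₂₃ : s((2 : Fin 4), 3) ∈ CG.edgeSet := by decide
  have hr₃ : 3 ≤ (walk r).length :=
    (walk r).three_le_length_of_mem_edges (h.2.1 r _ (by rw [hr]; norm_num)) (by decide)
      (by decide)
  have hother : ∀ e ∈ CG.edgeSet, e ≠ s(1, 2) → ∃ r' ≠ r, e ∈ (walk r').edges :=
    fun e he hne => h.exists_ne_mem_edges he <| by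
      rw [h.eq_zero_of_full_capacity hr he hne, Dem, if_neg hne]; norm_num
  obtain ⟨a, har, ha⟩ := h.exists_ne_mem_edges h₁₂ (by rw [hr, Dem, if_pos rfl]; norm_num)
  obtain ⟨b, hbr, hb⟩ := hother _ h₂₃ (by decide)
  obtain rfl | hab := eq_or_ne a b
  · have ha₄ := CG.four_le_length_of_mem_edges (walk a) ha hb
    by_cases hcover : ∀ e ∈ CG.edgeSet, e ∈ (walk a).edges
    · have := add_le_sum_univ (fun r => (walk r).length) har.symm
      linarith [CG.six_le_length_of_forall_mem_edges (walk a) hcover]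
    · obtain ⟨e, he, hea⟩ := not_forall₂.mp hcover
      obtain ⟨c, hcr, hc⟩ := hother e he fun he₁₂ => hea (he₁₂ ▸ ha)
      have := add_add_le_sum_univ (fun r => (walk r).length) har.symm hcr.symm
        fun hac => hea (hac ▸ hc)
      linarith [(walk c).two_le_length_of_mem_edges hc]
  · have := add_add_le_sum_univ (fun r => (walk r).length) har.symm hbr.symm hab
    linarith [(walk a).three_le_length_of_mem_edges ha (by decide) (by decide),
      (walk b).three_le_length_of_mem_edges hb (by decide) (by decide)]

end Feasible

/-- The paper's Theorem 2, instantiated on the counterexample: although the demand `12`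
on the paper's edge `{2,3}` (here `{1,2}`) strictly exceeds the capacity `8`, there is
a feasible solution of cost `7`, every feasible solution in which some robot sprays the
full capacity `8` on that edge has cost at least `9 > 7`, and consequently no
cost-minimal feasible solution contains a robot spraying the full capacity on that
edge. -/
theorem counterexample_no_optimal_full_capacity :
    Dem s(1, 2) > 8 ∧
    (∃ (R : ℕ) (walk : Fin R → CG.Walk 0 0) (y : Fin R → Sym2 (Fin 4) → ℝ),
      Feasible walk y ∧ ∑ r, (walk r).length = 7) ∧
    (∀ (R : ℕ) (walk : Fin R → CG.Walk 0 0) (y : Fin R → Sym2 (Fin 4) → ℝ),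
      Feasible walk y → (∃ r, y r s(1, 2) = 8) → 9 ≤ ∑ r, (walk r).length) ∧
    (∀ (R : ℕ) (walk : Fin R → CG.Walk 0 0) (y : Fin R → Sym2 (Fin 4) → ℝ),
      Feasible walk y →
      (∀ (R' : ℕ) (walk' : Fin R' → CG.Walk 0 0) (y' : Fin R' → Sym2 (Fin 4) → ℝ),
        Feasible walk' y' → ∑ r, (walk r).length ≤ ∑ r', (walk' r').length) →
      ∀ r, y r s(1, 2) ≠ 8) := by
  have hseven : ∑ r, (![triangleWalk, squareWalk] r).length = 7 := by
    rw [Fin.sum_univ_two]; rfl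
  refine ⟨by rw [Dem, if_pos rfl]; norm_num,
    ⟨2, _, _, feasible_triangleWalk_squareWalk, hseven⟩,
    fun R walk y h ⟨r, hr⟩ => h.nine_le_cost hr, fun R walk y h hopt r hr => ?_⟩
  have hle := hopt 2 _ _ feasible_triangleWalk_squareWalk
  rw [hseven] at hle
  exact absurd ((h.nine_le_cost hr).trans hle) (by norm_num)
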